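/- Let D ⊂ ℝ³ be bounded measurable, f ∈ L∞(D), K = (0, k_max], x̂ a unit vector. For k ∈ [-k_max,k_max] define u^∞(x̂,k) = ∫_D e^{-ik x̂·y} f(y) dy. Define F_{x̂} : L²(K) → L²(K) by (F_{x̂} φ)(t) = ∫_K u^∞(x̂, t-s) φ(s) ds, Q_{x̂} : L²(D) → L²(K) by (Q_{x̂} ψ)(t) = ∫_D e^{-it x̂·y} ψ(y) dy, and T_{x̂} : L²(D) → L²(D) by T_{x̂} g = f g. Then F_{x̂} = Q_{x̂} ∘ T_{x̂} ∘ Q_{x̂}*, where the adjoint satisfies (Q_{x̂}* φ)(y) = ∫_K e^{is x̂·y} φ(s) ds. -/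

import Mathlib

open MeasureTheory Complex RealInnerProductSpace

/-! The kernel `u^∞(x̂, t - s)` of the far-field operator factors as
`e^{-i t x̂·y} e^{i s x̂·y}` inside the integral over `D`; since it is bounded, Fubini lets the
integral over `K` be taken innermost, where it produces `Q_{x̂}* φ`. -/

section BoundedKernel

variable {α β 𝕜 : Type*} [RCLike 𝕜] [MeasurableSpace α] [MeasurableSpace β]
  {μ : Measure α} {ν : Measure β} [SFinite μ] [IsFiniteMeasure ν]

theorem integral_integral_mul_swap_of_norm_le {K : α → β → 𝕜} {φ : α → 𝕜} {C : ℝ}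
    (hK : AEStronglyMeasurable (Function.uncurry K) (μ.prod ν))
    (hKC : ∀ᵐ y ∂ν, ∀ s, ‖K s y‖ ≤ C) (hφ : Integrable φ μ) :
    ∫ s, (∫ y, K s y ∂ν) * φ s ∂μ = ∫ y, ∫ s, K s y * φ s ∂μ ∂ν := by
  have hbound : ∀ᵐ p ∂μ.prod ν, ‖K p.1 p.2 * φ p.1‖ ≤ ‖φ p.1‖ * C := by
    filter_upwards [Measure.quasiMeasurePreserving_snd.ae hKC] with p hp
    rw [norm_mul, mul_comm]
    exact mul_le_mul_of_nonneg_left (hp p.1) (norm_nonneg _)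
  have hint : Integrable (fun p : α × β => K p.1 p.2 * φ p.1) (μ.prod ν) :=
    (hφ.norm.mul_prod (integrable_const C)).mono'
      (hK.mul (hφ.1.comp_quasiMeasurePreserving Measure.quasiMeasurePreserving_fst)) hbound
  simp_rw [← integral_mul_const]
  exact integral_integral_swap hint

end BoundedKernel

theorem exp_neg_I_sub_mul (t s a : ℝ) :
    exp (-(I * (t - s) * a)) = exp (-(I * t * a)) * exp (I * s * a) := by
  rw [← exp_add]
  ring_nf

theorem stmt11_general (D : Set (EuclideanSpace ℝ (Fin 3))) (hD : MeasurableSet D)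
    (hDb : Bornology.IsBounded D)
    (f : EuclideanSpace ℝ (Fin 3) → ℂ) (hfm : Measurable f)
    (hfb : ∃ M, ∀ y ∈ D, ‖f y‖ ≤ M)
    (xhat : EuclideanSpace ℝ (Fin 3))
    (kmax : ℝ)
    (φ : ℝ → ℂ) (hφ : IntegrableOn φ (Set.Ioc 0 kmax))
    (t : ℝ) :
    (∫ s in Set.Ioc (0:ℝ) kmax,
        (∫ y in D, Complex.exp (-(Complex.I * (t - s) * (⟪xhat, y⟫ : ℝ))) * f y) * φ s) =
      ∫ y in D, Complex.exp (-(Complex.I * t * (⟪xhat, y⟫ : ℝ))) * f y *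
        (∫ s in Set.Ioc (0:ℝ) kmax, Complex.exp (Complex.I * s * (⟪xhat, y⟫ : ℝ)) * φ s) := by
  obtain ⟨M, hM⟩ := hfb
  have : IsFiniteMeasure (volume.restrict D) :=
    isFiniteMeasure_restrict.mpr hDb.measure_lt_top.ne
  rw [integral_integral_mul_swap_of_norm_le (C := M) (by fun_prop) ?bound hφ]
  case bound =>
    filter_upwards [ae_restrict_mem hD] with y hy s
    simpa [norm_exp] using hM y hy
  refine integral_congr_ae (.of_forall fun y => ?_)
  simp only [← integral_const_mul, exp_neg_I_sub_mul]
  congr 1 with s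
  ring

theorem stmt11 (D : Set (EuclideanSpace ℝ (Fin 3))) (hD : MeasurableSet D)
    (hDb : Bornology.IsBounded D)
    (f : EuclideanSpace ℝ (Fin 3) → ℂ) (hfm : Measurable f)
    (hfb : ∃ M, ∀ y ∈ D, ‖f y‖ ≤ M)
    (xhat : EuclideanSpace ℝ (Fin 3)) (hxhat : ‖xhat‖ = 1)
    (kmax : ℝ) (hk : 0 < kmax)
    (φ : ℝ → ℂ) (hφ : IntegrableOn φ (Set.Ioc 0 kmax))
    (t : ℝ) (ht : t ∈ Set.Ioc (0:ℝ) kmax) :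
    (∫ s in Set.Ioc (0:ℝ) kmax,
        (∫ y in D, Complex.exp (-(Complex.I * (t - s) * (⟪xhat, y⟫ : ℝ))) * f y) * φ s) =
      ∫ y in D, Complex.exp (-(Complex.I * t * (⟪xhat, y⟫ : ℝ))) * f y *
        (∫ s in Set.Ioc (0:ℝ) kmax, Complex.exp (Complex.I * s * (⟪xhat, y⟫ : ℝ)) * φ s) :=
  stmt11_general D hD hDb f hfm hfb xhat kmax φ hφ t
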